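/- arXiv:1602.02808 — 2 statements merged into one kernel-verified Lean document; each statement's English description precedes it below -/
import Mathlib

section
/- Let 1 < q < 2 and α > 0. Then there is no function G : ℝⁿ → ℝ satisfying 2G((ξ+η)/2) + α|ξ−η|^q ≤ G(ξ) + G(η) for all ξ, η ∈ ℝⁿ. -/
/-!
With `Δ G x v = G (x + v) + G (x - v) - 2 G x`, the hypothesis gives `Δ G x v ≥ α 2^q ‖v‖^q`.
Since `Δ G x (2v) = Δ G (x + v) v + Δ G (x - v) v + 2 Δ G x v`, any bound `Δ G x v ≥ β ‖v‖^q`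
valid for all `x, v` self-improves to `β' = (4 / 2^q) β`. For `q < 2` this factor exceeds `1`,
so iterating makes `Δ G 0 v` unbounded for any `v ≠ 0`.
-/

def secondDiff {E : Type*} [AddCommGroup E] (G : E → ℝ) (x v : E) : ℝ :=
  G (x + v) + G (x - v) - 2 * G x

theorem secondDiff_add_self {E : Type*} [AddCommGroup E] (G : E → ℝ) (x v : E) :
    secondDiff G x (v + v) =
      secondDiff G (x + v) v + secondDiff G (x - v) v + 2 * secondDiff G x v := by
  simp only [secondDiff, add_sub_cancel_right, sub_add_cancel, ← add_assoc, sub_sub]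
  ring

section
variable {E : Type*} [NormedAddCommGroup E] [NormedSpace ℝ E] {G : E → ℝ} {q α β : ℝ}

theorem mul_rpow_le_secondDiff
    (hG : ∀ ξ η : E, 2 * G ((2:ℝ)⁻¹ • (ξ + η)) + α * ‖ξ - η‖ ^ q ≤ G ξ + G η) (x v : E) :
    α * 2 ^ q * ‖v‖ ^ q ≤ secondDiff G x v := by
  have hmid : (2:ℝ)⁻¹ • ((x + v) + (x - v)) = x := by module
  have hdiff : (x + v) - (x - v) = (2:ℝ) • v := by module
  have h := hG (x + v) (x - v)
  rw [hmid, hdiff, norm_smul, Real.norm_two, Real.mul_rpow zero_le_two (norm_nonneg v)] at h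
  rw [secondDiff]
  linarith

theorem four_div_rpow_mul_le_secondDiff (h : ∀ x v : E, β * ‖v‖ ^ q ≤ secondDiff G x v)
    (x v : E) : 4 / 2 ^ q * β * ‖v‖ ^ q ≤ secondDiff G x v := by
  set w := (2:ℝ)⁻¹ • v
  have hv : v = w + w := by module
  have hw : ‖w‖ ^ q = ‖v‖ ^ q / 2 ^ q := by
    rw [norm_smul, norm_inv, Real.norm_two, Real.mul_rpow (by norm_num) (norm_nonneg v),
      Real.inv_rpow zero_le_two, inv_mul_eq_div]
  calc 4 / 2 ^ q * β * ‖v‖ ^ q = 4 * (β * ‖w‖ ^ q) := by rw [hw]; ring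
    _ ≤ secondDiff G (x + w) w + secondDiff G (x - w) w + 2 * secondDiff G x w := by
      linarith [h (x + w) w, h (x - w) w, h x w]
    _ = secondDiff G x v := by rw [hv, secondDiff_add_self]

theorem pow_mul_le_secondDiff (h : ∀ x v : E, β * ‖v‖ ^ q ≤ secondDiff G x v) (k : ℕ)
    (x v : E) : (4 / 2 ^ q) ^ k * β * ‖v‖ ^ q ≤ secondDiff G x v := by
  induction k generalizing β with
  | zero => simpa using h x v
  | succ k ih =>
    have := ih (four_div_rpow_mul_le_secondDiff h)
    rwa [pow_succ, mul_assoc _ (4 / 2 ^ q)]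

theorem not_exists_midpoint_uniformlyConvex_of_lt_two [Nontrivial E] (hq : q < 2) (hα : 0 < α) :
    ¬ ∃ G : E → ℝ, ∀ ξ η : E, 2 * G ((2:ℝ)⁻¹ • (ξ + η)) + α * ‖ξ - η‖ ^ q ≤ G ξ + G η := by
  rintro ⟨G, hG⟩
  obtain ⟨v, hv⟩ := exists_ne (0 : E)
  have hc : 0 < α * 2 ^ q * ‖v‖ ^ q := by
    have := norm_pos_iff.mpr hv
    positivity
  have hr : 1 < 4 / (2:ℝ) ^ q := by
    rw [one_lt_div (by positivity)]
    calc (2:ℝ) ^ q < 2 ^ (2:ℝ) := Real.rpow_lt_rpow_of_exponent_lt one_lt_two hq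
      _ = 4 := by norm_num
  obtain ⟨k, hk⟩ := pow_unbounded_of_one_lt (secondDiff G 0 v / (α * 2 ^ q * ‖v‖ ^ q)) hr
  rw [div_lt_iff₀ hc] at hk
  linarith [pow_mul_le_secondDiff (mul_rpow_le_secondDiff hG) k 0 v]

end

theorem no_uniformly_convex_of_power_lt_two_general {n : ℕ} (hn : 0 < n) (q α : ℝ)
    (hq2 : q < 2) (hα : 0 < α) :
    ¬ ∃ G : EuclideanSpace ℝ (Fin n) → ℝ,
        ∀ ξ η : EuclideanSpace ℝ (Fin n),
          2 * G ((2:ℝ)⁻¹ • (ξ + η)) + α * ‖ξ - η‖ ^ q ≤ G ξ + G η := by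
  have : Nonempty (Fin n) := ⟨⟨0, hn⟩⟩
  exact not_exists_midpoint_uniformlyConvex_of_lt_two hq2 hα

/-- **Remark.** For `1 < q < 2` and `α > 0`, no finite-valued function `G : ℝⁿ → ℝ` (`n ≥ 1`)
can be uniformly convex of power `q`-type, i.e. satisfy
`2G((ξ+η)/2) + α|ξ−η|^q ≤ G(ξ) + G(η)` for all `ξ, η ∈ ℝⁿ`. -/
theorem no_uniformly_convex_of_power_lt_two {n : ℕ} (hn : 0 < n) (q α : ℝ)
    (hq1 : 1 < q) (hq2 : q < 2) (hα : 0 < α) :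
    ¬ ∃ G : EuclideanSpace ℝ (Fin n) → ℝ,
        ∀ ξ η : EuclideanSpace ℝ (Fin n),
          2 * G ((2:ℝ)⁻¹ • (ξ + η)) + α * ‖ξ - η‖ ^ q ≤ G ξ + G η :=
  no_uniformly_convex_of_power_lt_two_general hn q α hq2 hα
end

section
/- Let q ≥ 2, M, M₁ > 0, and let a_0 ≤ a_1 ≤ … ≤ a_N be a non-decreasing finite sequence of positive real numbers with a_m ≤ M₁ for all 0 ≤ m ≤ N and a_m ≤ M (a_{m+1} − a_m)^{1/q} for all 0 ≤ m ≤ N−1. Then there is a constant C₁ > 0 depending only on q, M and M₁ such that a_0^{1−q} − a_N^{1−q} ≥ C₁ N, and consequently a_0 ≤ (C₁ N)^{−1/(q−1)}. -/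
/-!
Put `φ(x) = x^{1-q}`. It suffices that every step decreases `φ` by a fixed amount `C₁`, since the
decrements telescope. If `a_{m+1} ≥ 2 a_m`, then `φ(a_{m+1}) ≤ 2^{1-q} φ(a_m)`, so the decrement is at
least `(1 - 2^{1-q}) φ(a_m) ≥ (1 - 2^{1-q}) M₁^{1-q}`. If `a_{m+1} ≤ 2 a_m`, the mean value bound
`φ(a) - φ(b) ≥ (q-1)(b-a) b^{-q}` together with `b - a ≥ (a/M)^q` and `b ≤ 2a` gives a decrement
of at least `(q-1)(2M)^{-q}`: the powers of `a` cancel.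
-/

noncomputable section

open Real Finset

lemma two_rpow_one_sub_lt_one {q : ℝ} (hq : 1 < q) : (2 : ℝ) ^ (1 - q) < 1 :=
  rpow_lt_one_of_one_lt_of_neg one_lt_two (by linarith)

-- Bernoulli's inequality for `(b/a)^q`, multiplied through by `a b^{-q}`.
lemma sub_mul_rpow_neg_le_rpow_one_sub_sub {q a b : ℝ} (hq : 1 ≤ q) (ha : 0 < a) (hab : a ≤ b) :
    (q - 1) * (b - a) * b ^ (-q) ≤ a ^ (1 - q) - b ^ (1 - q) := by
  have hb : 0 < b := ha.trans_le hab
  have hbern : 1 + q * ((b - a) / a) ≤ (b / a) ^ q := by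
    have h := one_add_mul_self_le_rpow_one_add
      (show -1 ≤ (b - a) / a from (neg_one_lt_zero.trans_le (by positivity)).le) hq
    rwa [show 1 + (b - a) / a = b / a by field_simp; ring] at h
  have hlin : a + q * (b - a) ≤ a ^ (1 - q) * b ^ q := by
    have h := mul_le_mul_of_nonneg_left hbern ha.le
    rwa [show a * (1 + q * ((b - a) / a)) = a + q * (b - a) by field_simp,
      show a * (b / a) ^ q = a ^ (1 - q) * b ^ q by
        rw [div_rpow hb.le ha.le, rpow_sub ha, rpow_one]; ring] at h
  have hsplit : b ^ (1 - q) = b * b ^ (-q) := by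
    rw [sub_eq_add_neg, rpow_add hb, rpow_one]
  have hdiv : (a + q * (b - a)) * b ^ (-q) ≤ a ^ (1 - q) := by
    rw [rpow_neg hb.le, mul_inv_le_iff₀ (rpow_pos_of_pos hb q)]
    exact hlin
  rw [hsplit]
  linarith

lemma div_rpow_le_sub_of_le_mul_rpow_inv {q M a b : ℝ} (hq : 0 < q) (hM : 0 < M) (ha : 0 ≤ a)
    (hab : a ≤ b) (h : a ≤ M * (b - a) ^ (1 / q)) : (a / M) ^ q ≤ b - a := by
  have h' : (a / M) ^ q ≤ ((b - a) ^ (1 / q)) ^ q :=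
    rpow_le_rpow (by positivity) ((div_le_iff₀' hM).2 h) hq.le
  rwa [← rpow_mul (sub_nonneg.2 hab), one_div, inv_mul_cancel₀ hq.ne', rpow_one] at h'

lemma mul_le_sub_of_forall_le_sub_succ {f : ℕ → ℝ} {c : ℝ} {N : ℕ}
    (h : ∀ m < N, c ≤ f m - f (m + 1)) : c * N ≤ f 0 - f N := by
  have hsum := sum_le_sum fun m hm ↦ h m (mem_range.1 hm)
  rwa [sum_const, card_range, nsmul_eq_mul, mul_comm, sum_range_sub' f N] at hsum

lemma le_rpow_neg_inv_of_le_rpow_one_sub {q x c : ℝ} (hq : 1 < q) (hx : 0 < x) (hc : 0 < c)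
    (h : c ≤ x ^ (1 - q)) : x ≤ c ^ (-(1 / (q - 1))) := by
  have hq' : q - 1 ≠ 0 := (sub_pos.2 hq).ne'
  have hx' : (x ^ (1 - q)) ^ (-(1 / (q - 1))) = x := by
    rw [← rpow_mul hx.le, show (1 - q) * -(1 / (q - 1)) = 1 by field_simp; ring, rpow_one]
  calc x = (x ^ (1 - q)) ^ (-(1 / (q - 1))) := hx'.symm
    _ ≤ c ^ (-(1 / (q - 1))) :=
      rpow_le_rpow_of_nonpos hc h (neg_nonpos.2 (one_div_pos.2 (sub_pos.2 hq)).le)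

namespace DiscreteIteration

def stepConst (q M M₁ : ℝ) : ℝ :=
  min ((1 - 2 ^ (1 - q)) * M₁ ^ (1 - q)) ((q - 1) * (2 * M) ^ (-q))

lemma stepConst_pos {q M M₁ : ℝ} (hq : 1 < q) (hM : 0 < M) (hM₁ : 0 < M₁) :
    0 < stepConst q M M₁ :=
  lt_min (mul_pos (sub_pos.2 (two_rpow_one_sub_lt_one hq)) (rpow_pos_of_pos hM₁ _))
    (mul_pos (sub_pos.2 hq) (rpow_pos_of_pos (by positivity) _))

lemma rpow_one_sub_sub_ge_of_le_two_mul {q M a b : ℝ} (hq : 1 < q) (hM : 0 < M) (ha : 0 < a)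
    (hab : a ≤ b) (hb : b ≤ 2 * a) (h : a ≤ M * (b - a) ^ (1 / q)) :
    (q - 1) * (2 * M) ^ (-q) ≤ a ^ (1 - q) - b ^ (1 - q) := by
  have hjump : (a / M) ^ q * (2 * a) ^ (-q) ≤ (b - a) * b ^ (-q) :=
    mul_le_mul (div_rpow_le_sub_of_le_mul_rpow_inv (by linarith) hM ha.le hab h)
      (rpow_le_rpow_of_nonpos (ha.trans_le hab) hb (by linarith)) (by positivity)
      (sub_nonneg.2 hab)
  have hcancel : (a / M) ^ q * (2 * a) ^ (-q) = (2 * M) ^ (-q) := by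
    rw [rpow_neg (by positivity), rpow_neg (by positivity), ← inv_rpow (by positivity),
      ← inv_rpow (by positivity), ← mul_rpow (by positivity) (by positivity)]
    congr 1
    field_simp
  calc (q - 1) * (2 * M) ^ (-q) ≤ (q - 1) * ((b - a) * b ^ (-q)) := by
        rw [← hcancel]; exact mul_le_mul_of_nonneg_left hjump (by linarith)
    _ = (q - 1) * (b - a) * b ^ (-q) := by ring
    _ ≤ a ^ (1 - q) - b ^ (1 - q) := sub_mul_rpow_neg_le_rpow_one_sub_sub hq.le ha hab

lemma rpow_one_sub_sub_ge_of_two_mul_le {q M₁ a b : ℝ} (hq : 1 < q) (ha : 0 < a) (haM : a ≤ M₁)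
    (hb : 2 * a ≤ b) :
    (1 - 2 ^ (1 - q)) * M₁ ^ (1 - q) ≤ a ^ (1 - q) - b ^ (1 - q) := by
  have hb' : b ^ (1 - q) ≤ 2 ^ (1 - q) * a ^ (1 - q) := by
    rw [← mul_rpow zero_le_two ha.le]
    exact rpow_le_rpow_of_nonpos (by positivity) hb (by linarith)
  have hM₁ : M₁ ^ (1 - q) ≤ a ^ (1 - q) := rpow_le_rpow_of_nonpos ha haM (by linarith)
  nlinarith [two_rpow_one_sub_lt_one hq]

lemma stepConst_le_rpow_one_sub_sub {q M M₁ a b : ℝ} (hq : 1 < q) (hM : 0 < M) (ha : 0 < a)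
    (hab : a ≤ b) (haM : a ≤ M₁) (h : a ≤ M * (b - a) ^ (1 / q)) :
    stepConst q M M₁ ≤ a ^ (1 - q) - b ^ (1 - q) := by
  rcases le_total b (2 * a) with hb | hb
  · exact (min_le_right _ _).trans (rpow_one_sub_sub_ge_of_le_two_mul hq hM ha hab hb h)
  · exact (min_le_left _ _).trans (rpow_one_sub_sub_ge_of_two_mul_le hq ha haM hb)

end DiscreteIteration

open DiscreteIteration in
/-- **Lemma (discrete iteration).** Let `q ≥ 2` and `M, M₁ > 0`. There is `C₁ > 0`,
depending only on `q, M, M₁`, such that for every non-decreasing finite sequence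
`0 < a_0 ≤ … ≤ a_N ≤ M₁` satisfying `a_m ≤ M (a_{m+1} − a_m)^{1/q}` one has
`a_0^{1−q} − a_N^{1−q} ≥ C₁ N`, and consequently `a_0 ≤ (C₁ N)^{−1/(q−1)}`. -/
theorem discrete_iteration_lemma (q M M₁ : ℝ) (hq : 2 ≤ q) (hM : 0 < M) (hM₁ : 0 < M₁) :
    ∃ C₁ > 0, ∀ (N : ℕ) (a : ℕ → ℝ),
      (∀ m ≤ N, 0 < a m) →
      (∀ m < N, a m ≤ a (m + 1)) →
      (∀ m ≤ N, a m ≤ M₁) →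
      (∀ m < N, a m ≤ M * (a (m + 1) - a m) ^ (1 / q)) →
      C₁ * N ≤ a 0 ^ (1 - q) - a N ^ (1 - q) ∧
      (0 < N → a 0 ≤ (C₁ * N) ^ (-(1 / (q - 1)))) := by
  have hq1 : 1 < q := by linarith
  refine ⟨stepConst q M M₁, stepConst_pos hq1 hM hM₁, fun N a hpos hmono hbd hrec ↦ ?_⟩
  have hdecay : stepConst q M M₁ * N ≤ a 0 ^ (1 - q) - a N ^ (1 - q) :=
    mul_le_sub_of_forall_le_sub_succ fun m hm ↦
      stepConst_le_rpow_one_sub_sub hq1 hM (hpos m hm.le) (hmono m hm) (hbd m hm.le) (hrec m hm)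
  refine ⟨hdecay, fun hN ↦ le_rpow_neg_inv_of_le_rpow_one_sub hq1 (hpos 0 N.zero_le)
    (mul_pos (stepConst_pos hq1 hM hM₁) (Nat.cast_pos.2 hN)) ?_⟩
  have haN : 0 < a N ^ (1 - q) := rpow_pos_of_pos (hpos N le_rfl) _
  linarith
end
end
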